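/- Let u, v : ℝ × ℝ → ℝ be smooth (C^∞) functions of (t, x) and let a, b, c, ε, κ, λ, σ be real constants with b = 0, ε = 0, κ = 0, λ = 0, a ≠ 0, c ≠ 0, and suppose a·u(t,x) + c > 0 for all (t, x). If (u, v) solves the BBM-KdV system, then the vector with components C^t = (1/a)·(a·u + c)·ln(a·u + c) + (a/(2c))·(v² − σ·v_x²) and C^x = (a·u + c)·(ln(a·u + c) + 1)·v + (a·v/c)·(a·v²/3 + σ·v_tx) satisfies the conservation law ∂_t C^t + ∂_x C^x = 0 at every point (t, x). -/

import Mathlib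

noncomputable def pt (f : ℝ × ℝ → ℝ) : ℝ × ℝ → ℝ :=
  fun p => deriv (fun s => f (s, p.2)) p.1

noncomputable def px (f : ℝ × ℝ → ℝ) : ℝ × ℝ → ℝ :=
  fun p => deriv (fun s => f (p.1, s)) p.2

lemma sliceT_contDiff {f : ℝ × ℝ → ℝ} (hf : ContDiff ℝ (⊤ : ℕ∞) f) (y : ℝ) :
    ContDiff ℝ (⊤ : ℕ∞) (fun s : ℝ => f (s, y)) :=
  hf.comp (contDiff_id.prodMk contDiff_const)

lemma sliceX_contDiff {f : ℝ × ℝ → ℝ} (hf : ContDiff ℝ (⊤ : ℕ∞) f) (x : ℝ) :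
    ContDiff ℝ (⊤ : ℕ∞) (fun s : ℝ => f (x, s)) :=
  hf.comp (contDiff_const.prodMk contDiff_id)

lemma hasDerivAt_pt {f : ℝ × ℝ → ℝ} (hf : ContDiff ℝ (⊤ : ℕ∞) f) (p : ℝ × ℝ) :
    HasDerivAt (fun s => f (s, p.2)) (pt f p) p.1 :=
  (((sliceT_contDiff hf p.2).differentiable (by simp)) p.1).hasDerivAt

lemma hasDerivAt_px {f : ℝ × ℝ → ℝ} (hf : ContDiff ℝ (⊤ : ℕ∞) f) (p : ℝ × ℝ) :
    HasDerivAt (fun s => f (p.1, s)) (px f p) p.2 :=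
  (((sliceX_contDiff hf p.1).differentiable (by simp)) p.2).hasDerivAt

lemma pt_eq_fderiv {f : ℝ × ℝ → ℝ} (hf : ContDiff ℝ (⊤ : ℕ∞) f) (p : ℝ × ℝ) :
    pt f p = fderiv ℝ f p (1, 0) := by
  have h1 : HasDerivAt (fun s : ℝ => (s, p.2)) ((1 : ℝ), (0 : ℝ)) p.1 :=
    (hasDerivAt_id p.1).prodMk (hasDerivAt_const p.1 p.2)
  have h2 : HasDerivAt (fun s => f (s, p.2)) (fderiv ℝ f p (1, 0)) p.1 := by
    exact ((hf.differentiable (by simp) p).hasFDerivAt.comp_hasDerivAt p.1 h1)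
  exact ((hasDerivAt_pt hf p).unique h2)

lemma px_eq_fderiv {f : ℝ × ℝ → ℝ} (hf : ContDiff ℝ (⊤ : ℕ∞) f) (p : ℝ × ℝ) :
    px f p = fderiv ℝ f p (0, 1) := by
  have h1 : HasDerivAt (fun s : ℝ => (p.1, s)) ((0 : ℝ), (1 : ℝ)) p.2 :=
    (hasDerivAt_const p.2 p.1).prodMk (hasDerivAt_id p.2)
  have h2 : HasDerivAt (fun s => f (p.1, s)) (fderiv ℝ f p (0, 1)) p.2 := by
    exact ((hf.differentiable (by simp) p).hasFDerivAt.comp_hasDerivAt p.2 h1)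
  exact ((hasDerivAt_px hf p).unique h2)

lemma contDiff_pt {f : ℝ × ℝ → ℝ} (hf : ContDiff ℝ (⊤ : ℕ∞) f) : ContDiff ℝ (⊤ : ℕ∞) (pt f) := by
  have : (pt f) = fun p => fderiv ℝ f p (1, 0) := funext fun p => pt_eq_fderiv hf p
  rw [this]
  exact (hf.fderiv_right (by simp)).clm_apply contDiff_const

lemma contDiff_px {f : ℝ × ℝ → ℝ} (hf : ContDiff ℝ (⊤ : ℕ∞) f) : ContDiff ℝ (⊤ : ℕ∞) (px f) := by
  have : (px f) = fun p => fderiv ℝ f p (0, 1) := funext fun p => px_eq_fderiv hf p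
  rw [this]
  exact (hf.fderiv_right (by simp)).clm_apply contDiff_const

lemma clairaut {f : ℝ × ℝ → ℝ} (hf : ContDiff ℝ (⊤ : ℕ∞) f) (p : ℝ × ℝ) :
    pt (px f) p = px (pt f) p := by
  have hdf : Differentiable ℝ (fderiv ℝ f) := (hf.fderiv_right (m := (⊤ : ℕ∞)) (by simp)).differentiable (by simp)
  have key : ∀ (w z : ℝ × ℝ), fderiv ℝ (fun q => fderiv ℝ f q z) p w
      = fderiv ℝ (fderiv ℝ f) p w z := by
    intro w z
    have := fderiv_clm_apply (hdf p) (differentiableAt_const z)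
    rw [this]
    simp
  have sym := second_derivative_symmetric
    (f' := fderiv ℝ f) (f'' := fderiv ℝ (fderiv ℝ f) p)
    (fun x => (hf.differentiable (by simp) x).hasFDerivAt)
    ((hdf p).hasFDerivAt) (1, 0) (0, 1)
  rw [pt_eq_fderiv (contDiff_px hf) p, px_eq_fderiv (contDiff_pt hf) p]
  have e1 : px f = fun q => fderiv ℝ f q (0, 1) := funext fun q => px_eq_fderiv hf q
  have e2 : pt f = fun q => fderiv ℝ f q (1, 0) := funext fun q => pt_eq_fderiv hf q
  rw [e1, e2, key (1,0) (0,1), key (0,1) (1,0), sym]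
/-- The BBM-KdV system: F1 = 0 and F2 = 0 everywhere. -/
def BBMKdV (a b c ε κ lam σ : ℝ) (u v : ℝ × ℝ → ℝ) : Prop :=
  (∀ p : ℝ × ℝ, pt u p + (a + b) * v p * px u p + (a * u p + c) * px v p
      + ε * px (px (pt u)) p + κ * px (px (px v)) p = 0) ∧
  (∀ p : ℝ × ℝ, pt v p + (b * u p + c) * px u p + (a + b) * v p * px v p
      + lam * px (px (px u)) p + σ * px (px (pt v)) p = 0)

theorem stmt_3 (u v : ℝ × ℝ → ℝ) (hu : ContDiff ℝ (⊤ : ℕ∞) u) (hv : ContDiff ℝ (⊤ : ℕ∞) v)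
    (a b c ε κ lam σ : ℝ)
    (hb : b = 0) (he : ε = 0) (hk : κ = 0) (hl : lam = 0) (ha : a ≠ 0) (hc : c ≠ 0)
    (hpos : ∀ p : ℝ × ℝ, a * u p + c > 0)
    (hsol : BBMKdV a b c ε κ lam σ u v) :
    ∀ p : ℝ × ℝ,
      pt (fun q => (1 / a) * (a * u q + c) * Real.log (a * u q + c) + (a / (2 * c)) * (v q ^ 2 - σ * (px v q) ^ 2)) p
      + px (fun q => (a * u q + c) * (Real.log (a * u q + c) + 1) * v q + (a * v q / c) * (a * v q ^ 2 / 3 + σ * px (pt v) q)) p = 0 := by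
  obtain ⟨hF1, hF2⟩ := hsol
  subst hb he hk hl
  rintro ⟨t, x⟩
  have hP : a * u (t, x) + c > 0 := hpos (t, x)
  have hP' : a * u (t, x) + c ≠ 0 := ne_of_gt hP
  -- t-slice derivatives
  have h1 : HasDerivAt (fun s => u (s, x)) (pt u (t, x)) t := hasDerivAt_pt hu (t, x)
  have hVt : HasDerivAt (fun s => v (s, x)) (pt v (t, x)) t := hasDerivAt_pt hv (t, x)
  have hWt : HasDerivAt (fun s => px v (s, x)) (pt (px v) (t, x)) t :=
    hasDerivAt_pt (contDiff_px hv) (t, x)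
  have h2 : HasDerivAt (fun s => a * u (s, x) + c) (a * pt u (t, x)) t := by
    simpa using (h1.const_mul a).add_const c
  have hlog : HasDerivAt (fun s => Real.log (a * u (s, x) + c))
      (a * pt u (t, x) / (a * u (t, x) + c)) t := h2.log hP'
  have hA : HasDerivAt (fun s => 1 / a * (a * u (s, x) + c)) (1 / a * (a * pt u (t, x))) t :=
    h2.const_mul (1 / a)
  have hT : HasDerivAt (fun s => 1 / a * (a * u (s, x) + c) * Real.log (a * u (s, x) + c)
        + a / (2 * c) * (v (s, x) ^ 2 - σ * px v (s, x) ^ 2))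
      (pt u (t, x) * Real.log (a * u (t, x) + c) + pt u (t, x)
        + a / (2 * c) * (2 * v (t, x) * pt v (t, x)
          - 2 * σ * px v (t, x) * pt (px v) (t, x))) t := by
    refine HasDerivAt.congr_deriv ((hA.mul hlog).add
      (((hVt.pow 2).sub ((hWt.pow 2).const_mul σ)).const_mul (a / (2 * c)))) ?_
    field_simp
    ring
  -- x-slice derivatives
  have k1 : HasDerivAt (fun s => u (t, s)) (px u (t, x)) x := hasDerivAt_px hu (t, x)
  have kV : HasDerivAt (fun s => v (t, s)) (px v (t, x)) x := hasDerivAt_px hv (t, x)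
  have kM : HasDerivAt (fun s => px (pt v) (t, s)) (px (px (pt v)) (t, x)) x :=
    hasDerivAt_px (contDiff_px (contDiff_pt hv)) (t, x)
  have k2 : HasDerivAt (fun s => a * u (t, s) + c) (a * px u (t, x)) x := by
    simpa using (k1.const_mul a).add_const c
  have klog1 : HasDerivAt (fun s => Real.log (a * u (t, s) + c) + 1)
      (a * px u (t, x) / (a * u (t, x) + c)) x := (k2.log hP').add_const 1
  have hX : HasDerivAt (fun s => (a * u (t, s) + c) * (Real.log (a * u (t, s) + c) + 1) * v (t, s)
        + a * v (t, s) / c * (a * v (t, s) ^ 2 / 3 + σ * px (pt v) (t, s)))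
      (a * px u (t, x) * (Real.log (a * u (t, x) + c) + 1) * v (t, x)
        + a * px u (t, x) * v (t, x)
        + (a * u (t, x) + c) * (Real.log (a * u (t, x) + c) + 1) * px v (t, x)
        + a * px v (t, x) / c * (a * v (t, x) ^ 2 / 3 + σ * px (pt v) (t, x))
        + a * v (t, x) / c * (2 * a * v (t, x) * px v (t, x) / 3
            + σ * px (px (pt v)) (t, x))) x := by
    refine HasDerivAt.congr_deriv (((k2.mul klog1).mul kV).add
      (((kV.const_mul a).div_const c).mul
        ((((kV.pow 2).const_mul a).div_const 3).add (kM.const_mul σ)))) ?_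
    simp only [Pi.mul_apply]
    field_simp
    ring
  have e1 : pt (fun q => (1 / a) * (a * u q + c) * Real.log (a * u q + c)
      + (a / (2 * c)) * (v q ^ 2 - σ * (px v q) ^ 2)) (t, x)
      = pt u (t, x) * Real.log (a * u (t, x) + c) + pt u (t, x)
        + a / (2 * c) * (2 * v (t, x) * pt v (t, x)
          - 2 * σ * px v (t, x) * pt (px v) (t, x)) := hT.deriv
  have e2 : px (fun q => (a * u q + c) * (Real.log (a * u q + c) + 1) * v q
      + (a * v q / c) * (a * v q ^ 2 / 3 + σ * px (pt v) q)) (t, x)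
      = a * px u (t, x) * (Real.log (a * u (t, x) + c) + 1) * v (t, x)
        + a * px u (t, x) * v (t, x)
        + (a * u (t, x) + c) * (Real.log (a * u (t, x) + c) + 1) * px v (t, x)
        + a * px v (t, x) / c * (a * v (t, x) ^ 2 / 3 + σ * px (pt v) (t, x))
        + a * v (t, x) / c * (2 * a * v (t, x) * px v (t, x) / 3
            + σ * px (px (pt v)) (t, x)) := hX.deriv
  rw [e1, e2, clairaut hv (t, x)]
  have heq1 := hF1 (t, x)
  have heq2 := hF2 (t, x)
  have hcc : c * c⁻¹ = 1 := mul_inv_cancel₀ hc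
  linear_combination (Real.log (a * u (t, x) + c) + 1) * heq1 + (a * v (t, x) / c) * heq2
    - a * v (t, x) * px u (t, x) * hcc
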